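/- Let y be a cut vertex of a graph G and A a connected component of G − y such that G[A ∪ {y}] is a 2-club and A contains a vertex at distance exactly 2 from y. If y has exactly one neighbor in B = V(G) ∖ (A ∪ {y}), then 2ccedvs(G) = 2ccedvs(G − y − A) + 1. -/

import Mathlib

/-!
A sequence of edge deletions and vertex splits turning `Γ` into a disjoint union of 2-clubs `H`
can be read backwards as a map `φ` sending each vertex of `H` to the vertex of `Γ` it is a copy
of, and each edge of `H` to an edge of `Γ`. Conversely such a pair is realised by deleting the
edges of `Γ` that are not images of edges of `H` and then splitting vertices, once for every
surplus copy. So `twoCcedvs Γ` is the least cost of such a pair.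

Let `C = A ∪ {y}`; the only edge between `C` and its complement is `yb`. A solution for
`G - y - A`, placed next to the 2-club `G[C]`, solves `G` after deleting `yb`. Conversely, keeping
the copies of the vertices outside `C` in a solution for `G` gives a solution for `G - y - A`, once
the copies of `b` attached to a common copy of `y` are merged. It is strictly cheaper: otherwise
`yb`, `yw` and `wa` (for `a` at distance two from `y`) all survive, and `y` and `w` have a single
copy each, so the copies of `a` and `b` are joined by a path; in the resulting 2-club they are
at distance at most two, whereas `a` and `b` are at distance three in `G`.
-/

open SimpleGraph

/-- `H` is obtained from `G` by splitting vertex `v` into two copies `v` and `v'`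
(where `v'` was an isolated vertex), with `N(v₁) ∪ N(v₂) = N(v)`. -/
def IsSplitAt {V : Type*} (v v' : V) (G H : SimpleGraph V) : Prop :=
  v ≠ v' ∧ G.neighborSet v' = ∅ ∧ ¬ H.Adj v v' ∧
  (∀ x y : V, x ≠ v → x ≠ v' → y ≠ v → y ≠ v' → (H.Adj x y ↔ G.Adj x y)) ∧
  (∀ x : V, x ≠ v → x ≠ v' → ((H.Adj v x ∨ H.Adj v' x) ↔ G.Adj v x))

/-- `H` is obtained from `G` by a single vertex split. -/
def IsSplit {V : Type*} (G H : SimpleGraph V) : Prop :=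
  ∃ v v', IsSplitAt v v' G H

/-- `H` is obtained from `G` by deleting a single (existing) edge. -/
def IsEdgeDeletion {V : Type*} (G H : SimpleGraph V) : Prop :=
  ∃ u v : V, G.Adj u v ∧ H = G.deleteEdges {s(u, v)}

/-- Editing operations: edge deletion, or vertex split (recording the split vertex
and the name of the new copy). -/
inductive Op where
  | del : ℕ → ℕ → Op
  | split : ℕ → ℕ → Op

/-- Semantics of one operation. -/
def OpApplies : Op → SimpleGraph ℕ → SimpleGraph ℕ → Prop
  | Op.del u v, G, H => G.Adj u v ∧ H = G.deleteEdges {s(u, v)}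
  | Op.split v v', G, H => IsSplitAt v v' G H

/-- Applying a list of operations in order. -/
def OpsApply : List Op → SimpleGraph ℕ → SimpleGraph ℕ → Prop
  | [], G, H => H = G
  | o :: l, G, H => ∃ G', OpApplies o G G' ∧ OpsApply l G' H

def IsSplitOp : Op → Prop
  | Op.split _ _ => True
  | Op.del _ _ => False

/-- The set of vertices on which a split is performed in the list of operations. -/
def splitVerts (l : List Op) : Set ℕ := {v | ∃ v', Op.split v v' ∈ l}

/-- `G` is a disjoint union of 2-clubs: within each connected component all
distances are at most 2. -/
def Is2ClubGraph (G : SimpleGraph ℕ) : Prop :=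
  ∀ u v : ℕ, G.Reachable u v → G.dist u v ≤ 2

/-- Minimum number of vertex splits turning `G` into a disjoint union of 2-clubs. -/
noncomputable def twoCcvs (G : SimpleGraph ℕ) : ℕ :=
  sInf {k | ∃ l H, l.length = k ∧ (∀ o ∈ l, IsSplitOp o) ∧ OpsApply l G H ∧ Is2ClubGraph H}

/-- Minimum number of edge deletions and vertex splits turning `G` into a
disjoint union of 2-clubs. -/
noncomputable def twoCcedvs (G : SimpleGraph ℕ) : ℕ :=
  sInf {k | ∃ l H, l.length = k ∧ OpsApply l G H ∧ Is2ClubGraph H}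

/-- The subgraph of `G` induced on `s` (kept on the same vertex type, all
vertices outside `s` becoming isolated). -/
def inducedOn (G : SimpleGraph ℕ) (s : Set ℕ) : SimpleGraph ℕ where
  Adj x y := G.Adj x y ∧ x ∈ s ∧ y ∈ s
  symm := ⟨fun x y h => ⟨h.1.symm, h.2.2, h.2.1⟩⟩
  loopless := ⟨fun x h => G.loopless.irrefl x h.1⟩

/-- The set `s` induces a 2-club in `G` (connected, diameter at most 2). -/
def Inducing2Club (G : SimpleGraph ℕ) (s : Set ℕ) : Prop :=
  ∀ u ∈ s, ∀ v ∈ s, (inducedOn G s).Reachable u v ∧ (inducedOn G s).dist u v ≤ 2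

/-- The path with vertices `0, 1, …, m` (length `m`). -/
def pathG (m : ℕ) : SimpleGraph ℕ :=
  SimpleGraph.fromRel (fun i j => j = i + 1 ∧ j ≤ m)

/-- The cycle with vertices `0, 1, …, n-1`. -/
def cycleG (n : ℕ) : SimpleGraph ℕ :=
  SimpleGraph.fromRel (fun i j => i < n ∧ j = (i + 1) % n)

section GraphFacts

variable {V W : Type*}

lemma Function.update_eq_iff_of_ne [DecidableEq V] {φ : V → W} {a : V} {b x : W}
    (hxa : x ≠ φ a) (hxb : x ≠ b) (t : V) : Function.update φ a b t = x ↔ φ t = x := by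
  by_cases ht : t = a
  · subst ht
    simp only [Function.update_self]
    exact ⟨fun h => absurd h.symm hxb, fun h => absurd h.symm hxa⟩
  · rw [Function.update_of_ne ht]

lemma Function.update_eq_or_eq_iff [DecidableEq V] {φ : V → W} {a t : V} {b : W}
    (hb : φ t ≠ b) :
    Function.update φ a b t = φ a ∨ Function.update φ a b t = b ↔ φ t = φ a := by
  by_cases ht : t = a
  · subst ht
    simp
  · rw [Function.update_of_ne ht]
    exact ⟨fun h => h.resolve_right hb, Or.inl⟩

lemma SimpleGraph.edgeSet_finite_of_support_finite {G : SimpleGraph V} (h : G.support.Finite) :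
    G.edgeSet.Finite := by
  refine Set.Finite.subset ?_ (edgeSet_subset_sym2_iff.mpr subset_rfl)
  rw [Set.sym2_eq_mk_image]
  exact (h.prod h).image _

lemma SimpleGraph.Reachable.eq_or_adj_or_exists_adj_adj {G : SimpleGraph V} {u v : V}
    (h : G.Reachable u v) (hd : G.dist u v ≤ 2) :
    u = v ∨ G.Adj u v ∨ ∃ m, G.Adj u m ∧ G.Adj m v := by
  obtain ⟨p, hp⟩ := h.exists_walk_length_eq_dist
  rcases p with _ | ⟨h₁, _ | ⟨h₂, _ | ⟨_, p⟩⟩⟩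
  · exact Or.inl rfl
  · exact Or.inr (Or.inl h₁)
  · exact Or.inr (Or.inr ⟨_, h₁, h₂⟩)
  · simp only [Walk.length_cons] at hp
    omega

lemma SimpleGraph.exists_adj_adj_of_dist_eq_two {G : SimpleGraph V} {u v : V}
    (h : G.dist u v = 2) : u ≠ v ∧ ¬ G.Adj u v ∧ ∃ w, G.Adj u w ∧ G.Adj w v := by
  have huv : u ≠ v := by rintro rfl; simp at h
  have hadj : ¬ G.Adj u v := fun hadj => by simp [dist_eq_one_iff_adj.mpr hadj] at h
  refine ⟨huv, hadj, ?_⟩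
  rcases (Reachable.of_dist_ne_zero (by omega)).eq_or_adj_or_exists_adj_adj h.le with h | h | h
  exacts [absurd h huv, absurd h hadj, h]

lemma SimpleGraph.exists_walk_map_length_le {H : SimpleGraph V} (φ : V → W) {p q : V}
    (w : H.Walk p q) : ∃ w' : (H.map φ).Walk (φ p) (φ q), w'.length ≤ w.length := by
  induction w with
  | nil => exact ⟨Walk.nil, le_rfl⟩
  | @cons a c _ h _ ih =>
    obtain ⟨w', hw'⟩ := ih
    by_cases hac : φ a = φ c
    · exact ⟨w'.copy hac.symm rfl, by simp only [Walk.length_copy, Walk.length_cons]; omega⟩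
    · exact ⟨Walk.cons (map_adj_apply' h hac) w', by simp only [Walk.length_cons]; omega⟩

lemma SimpleGraph.dist_map_le_length {H : SimpleGraph V} (φ : V → W) {p q : V}
    (w : H.Walk p q) : (H.map φ).dist (φ p) (φ q) ≤ w.length := by
  obtain ⟨w', hw'⟩ := exists_walk_map_length_le φ w
  exact (dist_le w').trans hw'

lemma SimpleGraph.support_map_subset (H : SimpleGraph V) (φ : V → W) :
    (H.map φ).support ⊆ φ '' H.support := by
  rintro _ ⟨_, _, p, q, h, rfl, -⟩
  exact ⟨p, h.mem_support_left, rfl⟩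

lemma SimpleGraph.support_map_of_ne {H : SimpleGraph V} {φ : V → W}
    (hφ : ∀ ⦃p q⦄, H.Adj p q → φ p ≠ φ q) : (H.map φ).support = φ '' H.support := by
  refine (support_map_subset H φ).antisymm ?_
  rintro _ ⟨p, ⟨q, h⟩, rfl⟩
  exact (map_adj_apply' h (hφ h)).mem_support_left

lemma SimpleGraph.map_congr {H : SimpleGraph V} {φ ψ : V → W} (h : Set.EqOn φ ψ H.support) :
    H.map φ = H.map ψ := by
  ext a c
  simp only [map_adj']
  constructor <;> rintro ⟨hne, p, q, hpq, rfl, rfl⟩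
  · exact ⟨hne, p, q, hpq, (h hpq.mem_support_left).symm, (h hpq.mem_support_right).symm⟩
  · exact ⟨hne, p, q, hpq, h hpq.mem_support_left, h hpq.mem_support_right⟩

lemma SimpleGraph.map_sup (X Y : SimpleGraph V) (φ : V → W) :
    (X ⊔ Y).map φ = X.map φ ⊔ Y.map φ := by
  ext a c
  simp only [map_adj', sup_adj]
  aesop

lemma SimpleGraph.support_sup (X Y : SimpleGraph V) :
    (X ⊔ Y).support = X.support ∪ Y.support := by
  ext u
  simp only [mem_support, sup_adj, Set.mem_union]
  aesop

lemma SimpleGraph.Reachable.of_sup_left {X Y : SimpleGraph V}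
    (hXY : Disjoint X.support Y.support) {u v : V} (hu : u ∈ X.support)
    (h : (X ⊔ Y).Reachable u v) : X.Reachable u v := by
  obtain ⟨w⟩ := h
  induction w with
  | nil => rfl
  | cons h _ ih =>
    rcases h with h | h
    · exact h.reachable.trans (ih h.mem_support_right)
    · exact absurd h.mem_support_left (Set.disjoint_left.mp hXY hu)

lemma SimpleGraph.reachable_of_reachable_map {X H : SimpleGraph V} {r : V → W} (hXH : X ≤ H)
    (hfib : ∀ p ∈ X.support, ∀ q ∈ X.support, r p = r q → H.Reachable p q) {p q : V}
    (hp : p ∈ X.support) (hq : q ∈ X.support) (h : (X.map r).Reachable (r p) (r q)) :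
    H.Reachable p q := by
  obtain ⟨w⟩ := h
  suffices ∀ {a c} (w : (X.map r).Walk a c), ∀ p ∈ X.support, r p = a → c = r q →
      H.Reachable p q from this w p hp rfl rfl
  intro a c w
  induction w with
  | nil => exact fun p hp hpa hc => hfib p hp q hq (hpa.trans hc)
  | cons h _ ih =>
    rintro p hp rfl hc
    obtain ⟨-, p', q', h', hp', rfl⟩ := h
    exact (hfib p hp p' h'.mem_support_left hp'.symm).trans
      ((hXH h').reachable.trans (ih q' h'.mem_support_right rfl hc))

end GraphFacts

section TwoClub

@[simp]
lemma inducedOn_adj {G : SimpleGraph ℕ} {s : Set ℕ} {x z : ℕ} :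
    (inducedOn G s).Adj x z ↔ G.Adj x z ∧ x ∈ s ∧ z ∈ s :=
  Iff.rfl

lemma inducedOn_univ (G : SimpleGraph ℕ) : inducedOn G Set.univ = G := by
  ext
  simp [inducedOn]

lemma inducedOn_le (G : SimpleGraph ℕ) (s : Set ℕ) : inducedOn G s ≤ G :=
  fun _ _ h => h.1

lemma Inducing2Club.is2ClubGraph {G : SimpleGraph ℕ} {s : Set ℕ} (h : Inducing2Club G s) :
    Is2ClubGraph (inducedOn G s) := by
  intro u v huv
  by_cases hne : u = v
  · simp [hne]
  obtain ⟨_, -, hu, -⟩ := mem_support_of_reachable hne huv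
  obtain ⟨_, -, hv, -⟩ := mem_support_of_reachable (Ne.symm hne) huv.symm
  exact (h u hu v hv).2

lemma Is2ClubGraph.sup {X Y : SimpleGraph ℕ} (hX : Is2ClubGraph X) (hY : Is2ClubGraph Y)
    (hXY : Disjoint X.support Y.support) : Is2ClubGraph (X ⊔ Y) := by
  intro u v huv
  by_cases hne : u = v
  · simp [hne]
  have hu := mem_support_of_reachable hne huv
  rw [support_sup] at hu
  rcases hu with hu | hu
  · have h := huv.of_sup_left hXY hu
    exact (h.dist_anti le_sup_left).trans (hX u v h)
  · rw [sup_comm] at huv ⊢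
    have h := huv.of_sup_left hXY.symm hu
    exact (h.dist_anti le_sup_left).trans (hY u v h)

/-- Deleting the vertices outside `T` only destroys the paths `u - m - v` through a deleted `m`;
merging `u` and `v` repairs them. -/
lemma Is2ClubGraph.map_inducedOn {H : SimpleGraph ℕ} (hH : Is2ClubGraph H) {T : Set ℕ}
    {r : ℕ → ℕ} (hfib : ∀ p ∈ H.support, ∀ q ∈ H.support, r p = r q → H.Reachable p q)
    (hmerge : ∀ u ∈ T, ∀ v ∈ T, ∀ m ∉ T, H.Adj m u → H.Adj m v → r u = r v) :
    Is2ClubGraph ((inducedOn H T).map r) := by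
  intro u v huv
  by_cases hne : u = v
  · simp [hne]
  obtain ⟨p, hp, rfl⟩ := support_map_subset _ r (mem_support_of_reachable hne huv)
  obtain ⟨q, hq, rfl⟩ := support_map_subset _ r (mem_support_of_reachable (Ne.symm hne) huv.symm)
  have hpT : p ∈ T := by obtain ⟨_, -, h, -⟩ := hp; exact h
  have hqT : q ∈ T := by obtain ⟨_, -, h, -⟩ := hq; exact h
  have hXH := inducedOn_le H T
  have hpq : H.Reachable p q := reachable_of_reachable_map hXH
    (fun p hp q hq => hfib p (support_mono hXH hp) q (support_mono hXH hq)) hp hq huv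
  suffices ∃ w : (inducedOn H T).Walk p q, w.length ≤ 2 by
    obtain ⟨w, hw⟩ := this
    exact (dist_map_le_length r w).trans hw
  rcases hpq.eq_or_adj_or_exists_adj_adj (hH p q hpq) with rfl | hadj | ⟨m, hpm, hmq⟩
  · exact absurd rfl hne
  · exact ⟨Walk.cons (inducedOn_adj.mpr ⟨hadj, hpT, hqT⟩) Walk.nil, by simp⟩
  · by_cases hm : m ∈ T
    · exact ⟨Walk.cons (inducedOn_adj.mpr ⟨hpm, hpT, hm⟩)
        (Walk.cons (inducedOn_adj.mpr ⟨hmq, hm, hqT⟩) Walk.nil), by simp⟩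
    · exact absurd (hmerge p hpT q hqT m hm hpm.symm hmq) hne

lemma Is2ClubGraph.map_of_injOn {H : SimpleGraph ℕ} (hH : Is2ClubGraph H) {φ : ℕ → ℕ}
    (hφ : Set.InjOn φ H.support) : Is2ClubGraph (H.map φ) := by
  have := hH.map_inducedOn (T := Set.univ) (fun p hp q hq h => hφ hp hq h ▸ Reachable.refl p)
    (by simp)
  rwa [inducedOn_univ] at this

end TwoClub

section SplitExcess

variable {α β : Type*}

/-- The number of vertex splits needed to create the vertices `s` as copies of the vertices
`φ '' s`. -/
noncomputable def splitExcess (φ : α → β) (s : Set α) : ℕ := s.ncard - (φ '' s).ncard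

variable {φ : α → β} {s t : Set α}

lemma splitExcess_eq_zero_iff (hs : s.Finite) : splitExcess φ s = 0 ↔ s.InjOn φ := by
  have := Set.ncard_image_le (f := φ) hs
  refine ⟨fun h => Set.injOn_of_ncard_image_eq (by unfold splitExcess at h; omega) hs,
    fun h => ?_⟩
  simp [splitExcess, h.ncard_image]

lemma splitExcess_mono (ht : t.Finite) (hst : s ⊆ t) : splitExcess φ s ≤ splitExcess φ t := by
  have h₁ : φ '' t ⊆ φ '' s ∪ φ '' (t \ s) := by
    rw [← Set.image_union, Set.union_sdiff_cancel hst]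
  have h₂ := (Set.ncard_le_ncard h₁ (((ht.subset hst).image φ).union (ht.sdiff.image φ))).trans
    (Set.ncard_union_le _ _)
  have h₃ := Set.ncard_image_le (f := φ) (ht.sdiff (t := s))
  have h₄ := Set.ncard_sdiff_add_ncard_of_subset hst ht
  unfold splitExcess
  omega

lemma splitExcess_image_le {r : α → α} (hs : s.Finite) (hr : ∀ x, φ (r x) = φ x) :
    splitExcess φ (r '' s) ≤ splitExcess φ s := by
  have h₁ : φ '' (r '' s) = φ '' s := by simp [Set.image_image, hr]
  have h₂ := Set.ncard_image_le (f := r) hs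
  unfold splitExcess
  rw [h₁]
  omega

lemma splitExcess_add_le_union (hs : s.Finite) (ht : t.Finite) (hst : Disjoint s t) :
    splitExcess φ s + splitExcess φ t ≤ splitExcess φ (s ∪ t) := by
  have h₁ := Set.ncard_union_eq hst hs ht
  have h₂ : (φ '' (s ∪ t)).ncard ≤ (φ '' s).ncard + (φ '' t).ncard := by
    rw [Set.image_union]; exact Set.ncard_union_le _ _
  have h₃ := Set.ncard_image_le (f := φ) hs
  have h₄ := Set.ncard_image_le (f := φ) ht
  unfold splitExcess
  omega

lemma splitExcess_union_le (hs : s.Finite) (ht : t.Finite) (hst : Disjoint (φ '' s) (φ '' t)) :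
    splitExcess φ (s ∪ t) ≤ splitExcess φ s + splitExcess φ t := by
  have h₁ := Set.ncard_union_le s t
  have h₂ : (φ '' (s ∪ t)).ncard = (φ '' s).ncard + (φ '' t).ncard := by
    rw [Set.image_union]; exact Set.ncard_union_eq hst (hs.image φ) (ht.image φ)
  unfold splitExcess
  omega

lemma splitExcess_update_comp_le [DecidableEq β] (v v' : β) (hs : s.Finite) :
    splitExcess (Function.update id v' v ∘ φ) s ≤ splitExcess φ s + 1 := by
  have h₁ : φ '' s ⊆ insert v' (Function.update id v' v '' (φ '' s)) := by
    intro x hx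
    by_cases hxv : x = v'
    · exact Or.inl hxv
    · exact Or.inr ⟨x, hx, by simp [hxv]⟩
  have h₂ := (Set.ncard_le_ncard h₁ (((hs.image φ).image _).insert v')).trans
    (Set.ncard_insert_le _ _)
  unfold splitExcess
  rw [Set.image_comp]
  omega

lemma splitExcess_update_add_one [DecidableEq α] {p p' : α} {f : β} (hp : p ∈ s) (hp' : p' ∈ s)
    (hpp' : p ≠ p') (hφ : φ p = φ p') (hf : f ∉ φ '' s) (hs : s.Finite) :
    splitExcess (Function.update φ p' f) s + 1 = splitExcess φ s := by
  have h₁ : Function.update φ p' f '' s = insert f (φ '' s) := by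
    ext z
    simp only [Set.mem_image, Set.mem_insert_iff]
    constructor
    · rintro ⟨x, hx, rfl⟩
      by_cases hxp : x = p'
      · exact Or.inl (by simp [hxp])
      · exact Or.inr ⟨x, hx, by simp [hxp]⟩
    · rintro (rfl | ⟨x, hx, rfl⟩)
      · exact ⟨p', hp', by simp⟩
      · by_cases hxp : x = p'
        · exact ⟨p, hp, by simp [hpp', hφ, hxp]⟩
        · exact ⟨x, hx, by simp [hxp]⟩
  have h₂ : (φ '' s).ncard ≠ s.ncard := fun h => hpp' (Set.injOn_of_ncard_image_eq h hs hp hp' hφ)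
  have h₃ := Set.ncard_image_le (f := φ) hs
  unfold splitExcess
  rw [h₁, Set.ncard_insert_of_notMem hf (hs.image φ)]
  omega

end SplitExcess

section SplitOperation

variable {Γ Γ₁ : SimpleGraph ℕ} {v v' : ℕ}

lemma IsSplitAt.adj_of_adj (h : IsSplitAt v v' Γ Γ₁) {a x : ℕ} (ha : a = v ∨ a = v')
    (hxv : x ≠ v) (hxv' : x ≠ v') (hax : Γ₁.Adj a x) : Γ.Adj v x :=
  (h.2.2.2.2 x hxv hxv').1 (by rcases ha with rfl | rfl; exacts [Or.inl hax, Or.inr hax])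

lemma IsSplitAt.adj_update (h : IsSplitAt v v' Γ Γ₁) {x z : ℕ} (hxz : Γ₁.Adj x z) :
    Γ.Adj (Function.update id v' v x) (Function.update id v' v z) := by
  have hm : ∀ t, t = v ∨ t = v' → Function.update id v' v t = v := by
    rintro t (rfl | rfl) <;> simp [h.1]
  have hm' : ∀ t, t ≠ v' → Function.update id v' v t = t := fun t ht => by simp [ht]
  by_cases hx : x = v ∨ x = v' <;> by_cases hz : z = v ∨ z = v'
  · exfalso
    rcases hx with rfl | rfl <;> rcases hz with rfl | rfl
    exacts [hxz.ne rfl, h.2.2.1 hxz, h.2.2.1 hxz.symm, hxz.ne rfl]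
  · push Not at hz
    rw [hm x hx, hm' z hz.2]
    exact h.adj_of_adj hx hz.1 hz.2 hxz
  · push Not at hx
    rw [hm' x hx.2, hm z hz]
    exact (h.adj_of_adj hz hx.1 hx.2 hxz.symm).symm
  · push Not at hx hz
    rw [hm' x hx.2, hm' z hz.2]
    exact (h.2.2.2.1 x z hx.1 hx.2 hz.1 hz.2).1 hxz

lemma IsSplitAt.exists_adj_update (h : IsSplitAt v v' Γ Γ₁) {x z : ℕ} (hxz : Γ.Adj x z) :
    ∃ x' z', Γ₁.Adj x' z' ∧ Function.update id v' v x' = x ∧ Function.update id v' v z' = z := by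
  obtain ⟨hne, hiso, -, hrest, hv⟩ := h
  have hnv' : ∀ {a b}, Γ.Adj a b → a ≠ v' := fun hab ha =>
    (Set.eq_empty_iff_forall_notMem.mp hiso _) (ha ▸ hab : Γ.Adj v' _)
  have hx' := hnv' hxz
  have hz' := hnv' hxz.symm
  by_cases hxv : x = v
  · subst hxv
    rcases (hv z hxz.ne.symm hz').2 hxz with h₁ | h₁
    · exact ⟨x, z, h₁, by simp [hne], by simp [hz']⟩
    · exact ⟨v', z, h₁, by simp, by simp [hz']⟩
  by_cases hzv : z = v
  · subst hzv
    rcases (hv x hxv hx').2 hxz.symm with h₁ | h₁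
    · exact ⟨x, z, h₁.symm, by simp [hx'], by simp [hne]⟩
    · exact ⟨x, v', h₁.symm, by simp [hx'], by simp⟩
  · exact ⟨x, z, (hrest x z hxv hx' hzv hz').2 hxz, by simp [hx'], by simp [hz']⟩

lemma IsSplitAt.support_subset (h : IsSplitAt v v' Γ Γ₁) : Γ₁.support ⊆ insert v' Γ.support := by
  rintro x ⟨z, hxz⟩
  by_cases hx : x = v'
  · exact Or.inl hx
  · have := (h.adj_update hxz).mem_support_left
    rw [Function.update_of_ne hx] at this
    exact Or.inr this

end SplitOperation

section ClubCover

/-- A solution of the editing problem on `Γ`, read backwards: the resulting disjoint union of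
2-clubs `H`, where each vertex `p` is a copy of the vertex `φ p` of `Γ` and each edge a copy of an
edge of `Γ`. Its cost counts the splits that create the copies and the edges of `Γ` left without
a copy, which have to be deleted. -/
structure IsClubCover (Γ H : SimpleGraph ℕ) (φ : ℕ → ℕ) : Prop where
  map_adj : ∀ ⦃p q⦄, H.Adj p q → Γ.Adj (φ p) (φ q)
  is2ClubGraph : Is2ClubGraph H
  finite_support : H.support.Finite

noncomputable def coverCost (Γ H : SimpleGraph ℕ) (φ : ℕ → ℕ) : ℕ :=
  splitExcess φ H.support + (Γ \ H.map φ).edgeSet.ncard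

variable {Γ Γ₁ H : SimpleGraph ℕ} {φ : ℕ → ℕ}

lemma IsClubCover.map_le (hc : IsClubCover Γ H φ) : H.map φ ≤ Γ := by
  rintro _ _ ⟨-, p, q, h, rfl, rfl⟩
  exact hc.map_adj h

lemma isClubCover_bot (Γ : SimpleGraph ℕ) : IsClubCover Γ ⊥ id where
  map_adj _ _ h := h.elim
  is2ClubGraph u v h := by simp [reachable_bot.mp h]
  finite_support := by simp

lemma IsClubCover.of_deleteEdges {e : Sym2 ℕ} (hc : IsClubCover (Γ.deleteEdges {e}) H φ) :
    IsClubCover Γ H φ :=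
  ⟨fun _ _ h => deleteEdges_le _ (hc.map_adj h), hc.is2ClubGraph, hc.finite_support⟩

lemma coverCost_le_deleteEdges (hΓ : Γ.support.Finite) (e : Sym2 ℕ) :
    coverCost Γ H φ ≤ coverCost (Γ.deleteEdges {e}) H φ + 1 := by
  have hsub : (Γ \ H.map φ).edgeSet ⊆ insert e (Γ.deleteEdges {e} \ H.map φ).edgeSet := by
    intro e' he'
    simp only [edgeSet_sdiff, edgeSet_deleteEdges, Set.mem_insert_iff, Set.mem_sdiff,
      Set.mem_singleton_iff] at he' ⊢
    tauto
  have hfin : (Γ.deleteEdges {e} \ H.map φ).edgeSet.Finite :=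
    (edgeSet_finite_of_support_finite hΓ).subset
      (edgeSet_mono (sdiff_le.trans (deleteEdges_le _)))
  have := (Set.ncard_le_ncard hsub (hfin.insert e)).trans (Set.ncard_insert_le _ _)
  unfold coverCost
  omega

lemma IsClubCover.of_isSplitAt {v v' : ℕ} (h : IsSplitAt v v' Γ Γ₁) (hc : IsClubCover Γ₁ H φ) :
    IsClubCover Γ H (Function.update id v' v ∘ φ) :=
  ⟨fun _ _ hpq => h.adj_update (hc.map_adj hpq), hc.is2ClubGraph, hc.finite_support⟩

lemma coverCost_le_of_isSplitAt {v v' : ℕ} (h : IsSplitAt v v' Γ Γ₁) (hΓ₁ : Γ₁.support.Finite)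
    (hH : H.support.Finite) :
    coverCost Γ H (Function.update id v' v ∘ φ) ≤ coverCost Γ₁ H φ + 1 := by
  have hsub : (Γ \ H.map (Function.update id v' v ∘ φ)).edgeSet ⊆
      Sym2.map (Function.update id v' v) '' (Γ₁ \ H.map φ).edgeSet := by
    intro e he
    induction e using Sym2.ind with
    | h x z =>
      rw [mem_edgeSet, sdiff_adj] at he
      obtain ⟨x', z', hadj, rfl, rfl⟩ := h.exists_adj_update he.1
      refine ⟨s(x', z'), ⟨hadj, fun hmap => he.2 ?_⟩, rfl⟩
      rw [← map_map]
      exact map_adj_apply' hmap he.1.ne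
  have hfin : (Γ₁ \ H.map φ).edgeSet.Finite :=
    (edgeSet_finite_of_support_finite hΓ₁).subset (edgeSet_mono sdiff_le)
  have h₁ := (Set.ncard_le_ncard hsub (hfin.image _)).trans (Set.ncard_image_le hfin)
  have h₂ := splitExcess_update_comp_le (φ := φ) v v' hH
  unfold coverCost
  omega

lemma exists_isClubCover_of_opsApply {l : List Op} {Γ H : SimpleGraph ℕ}
    (happ : OpsApply l Γ H) (hΓ : Γ.support.Finite) (hH : Is2ClubGraph H) :
    ∃ H₀ φ, IsClubCover Γ H₀ φ ∧ coverCost Γ H₀ φ ≤ l.length := by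
  induction l generalizing Γ with
  | nil =>
    obtain rfl : H = Γ := happ
    exact ⟨H, id, ⟨fun _ _ h => h, hH, hΓ⟩, by simp [coverCost, splitExcess]⟩
  | cons o l ih =>
    obtain ⟨Γ₁, ho, hl⟩ := happ
    cases o with
    | del u v =>
      obtain ⟨-, rfl⟩ := ho
      obtain ⟨H₀, φ, hc, hcost⟩ := ih hl (hΓ.subset (support_mono (deleteEdges_le _)))
      exact ⟨H₀, φ, hc.of_deleteEdges,
        (coverCost_le_deleteEdges hΓ s(u, v)).trans (by simp only [List.length_cons]; omega)⟩
    | split v v' =>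
      have hΓ₁ := (hΓ.insert v').subset ho.support_subset
      obtain ⟨H₀, φ, hc, hcost⟩ := ih hl hΓ₁
      exact ⟨H₀, _, hc.of_isSplitAt ho, (coverCost_le_of_isSplitAt ho hΓ₁ hc.finite_support).trans
        (by simp only [List.length_cons]; omega)⟩

end ClubCover

section Realization

lemma OpsApply.append {l₁ l₂ : List Op} {G₁ G₂ G₃ : SimpleGraph ℕ} (h₁ : OpsApply l₁ G₁ G₂)
    (h₂ : OpsApply l₂ G₂ G₃) : OpsApply (l₁ ++ l₂) G₁ G₃ := by
  induction l₁ generalizing G₁ with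
  | nil =>
    obtain rfl : G₂ = G₁ := h₁
    exact h₂
  | cons o l ih =>
    obtain ⟨G', ho, hl⟩ := h₁
    exact ⟨G', ho, ih hl⟩

lemma exists_opsApply_deleteEdges (Γ : SimpleGraph ℕ) (s : Finset (Sym2 ℕ))
    (hs : (s : Set (Sym2 ℕ)) ⊆ Γ.edgeSet) :
    ∃ l, l.length = s.card ∧ OpsApply l Γ (Γ.deleteEdges s) := by
  induction s using Finset.induction_on generalizing Γ with
  | empty => exact ⟨[], rfl, by simp [OpsApply]⟩
  | insert e s he ih =>
    induction e using Sym2.ind with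
    | h x z =>
      have hs' : (s : Set (Sym2 ℕ)) ⊆ (Γ.deleteEdges {s(x, z)}).edgeSet := fun t ht => by
        rw [edgeSet_deleteEdges]
        exact ⟨hs (Finset.mem_insert_of_mem ht), fun h => he (h ▸ ht)⟩
      obtain ⟨l, hl, happ⟩ := ih _ hs'
      rw [deleteEdges_deleteEdges, ← Set.insert_eq, ← Finset.coe_insert] at happ
      exact ⟨Op.del x z :: l, by simp [hl, he], _, ⟨hs (Finset.mem_insert_self _ _), rfl⟩, happ⟩

lemma isSplitAt_map_update {H : SimpleGraph ℕ} {φ : ℕ → ℕ}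
    (hφ : ∀ ⦃p q⦄, H.Adj p q → φ p ≠ φ q) {p' f : ℕ} (hp' : p' ∈ H.support)
    (hf : f ∉ φ '' H.support) :
    IsSplitAt (φ p') f (H.map φ) (H.map (Function.update φ p' f)) := by
  have hS : ∀ t ∈ H.support, φ t ≠ f := fun t ht h => hf ⟨t, ht, h⟩
  have hψ : ∀ t, t ≠ p' → Function.update φ p' f t = φ t := fun t ht => Function.update_of_ne ht _ _
  refine ⟨fun h => hf ⟨p', hp', h⟩, ?_, ?_, ?_, ?_⟩
  · exact Set.eq_empty_iff_forall_notMem.mpr fun _ ⟨_, p, _, hpq, hp, _⟩ =>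
      hS p hpq.mem_support_left hp
  · rintro ⟨-, a, c, hac, ha, hc⟩
    obtain rfl : c = p' := by
      by_contra hcp
      exact hS c hac.mem_support_right (hψ c hcp ▸ hc)
    exact hφ hac (hψ a hac.ne ▸ ha)
  · intro x z hxv hxf hzv hzf
    simp only [map_adj', Function.update_eq_iff_of_ne hxv hxf, Function.update_eq_iff_of_ne hzv hzf]
  · intro x hxv hxf
    have hfib : ∀ t ∈ H.support, Function.update φ p' f t = φ p' ∨ Function.update φ p' f t = f ↔
        φ t = φ p' := fun t ht => Function.update_eq_or_eq_iff (hS t ht)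
    simp only [map_adj', Function.update_eq_iff_of_ne hxv hxf]
    constructor
    · rintro (⟨hne, a, c, hac, ha, hc⟩ | ⟨-, a, c, hac, ha, hc⟩)
      · exact ⟨hne, a, c, hac, (hfib a hac.mem_support_left).mp (Or.inl ha), hc⟩
      · exact ⟨Ne.symm hxv, a, c, hac, (hfib a hac.mem_support_left).mp (Or.inr ha), hc⟩
    · rintro ⟨hne, a, c, hac, ha, hc⟩
      rcases (hfib a hac.mem_support_left).mpr ha with ha | ha
      · exact Or.inl ⟨hne, a, c, hac, ha, hc⟩
      · exact Or.inr ⟨Ne.symm hxf, a, c, hac, ha, hc⟩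

lemma map_update_ne {H : SimpleGraph ℕ} {φ : ℕ → ℕ} (hφ : ∀ ⦃p q⦄, H.Adj p q → φ p ≠ φ q)
    {p' f : ℕ} (hf : f ∉ φ '' H.support) {a c : ℕ} (hac : H.Adj a c) :
    Function.update φ p' f a ≠ Function.update φ p' f c := by
  have hS : ∀ t ∈ H.support, φ t ≠ f := fun t ht h => hf ⟨t, ht, h⟩
  by_cases ha : a = p' <;> by_cases hc : c = p'
  · exact absurd (ha.trans hc.symm) hac.ne
  · simpa [ha, hc] using (hS c hac.mem_support_right).symm
  · simpa [ha, hc] using hS a hac.mem_support_left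
  · simpa [ha, hc] using hφ hac

lemma exists_opsApply_map_injOn {H : SimpleGraph ℕ} (hH : H.support.Finite) {φ : ℕ → ℕ}
    {n : ℕ} (hn : splitExcess φ H.support = n) (hφ : ∀ ⦃p q⦄, H.Adj p q → φ p ≠ φ q) :
    ∃ l ψ, l.length = n ∧ OpsApply l (H.map φ) (H.map ψ) ∧ H.support.InjOn ψ := by
  induction n generalizing φ with
  | zero => exact ⟨[], φ, rfl, rfl, (splitExcess_eq_zero_iff hH).mp hn⟩
  | succ n ih =>
    obtain ⟨p, hp, p', hp', hφp, hpp'⟩ :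
        ∃ p ∈ H.support, ∃ p' ∈ H.support, φ p = φ p' ∧ p ≠ p' := by
      have := (splitExcess_eq_zero_iff (φ := φ) hH).not.mp (by omega)
      simpa [Set.InjOn] using this
    obtain ⟨f, hf⟩ := (hH.image φ).exists_notMem
    have hn' := splitExcess_update_add_one hp hp' hpp' hφp hf hH
    obtain ⟨l, ψ, hl, happ, hinj⟩ :=
      ih (φ := Function.update φ p' f) (by omega) fun _ _ => map_update_ne hφ hf
    exact ⟨Op.split (φ p') f :: l, ψ, by simp [hl], ⟨_, isSplitAt_map_update hφ hp' hf, happ⟩,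
      hinj⟩

end Realization

section CoverCost

variable {Γ H : SimpleGraph ℕ} {φ : ℕ → ℕ}

lemma deleteEdges_edgeSet_sdiff {M : SimpleGraph ℕ} (hM : M ≤ Γ) :
    Γ.deleteEdges (Γ \ M).edgeSet = M := by
  rw [deleteEdges, fromEdgeSet_edgeSet, sdiff_sdiff_right_self, inf_eq_right.mpr hM]

lemma IsClubCover.exists_opsApply (hc : IsClubCover Γ H φ) (hΓ : Γ.support.Finite) :
    ∃ l H₂, l.length ≤ coverCost Γ H φ ∧ OpsApply l Γ H₂ ∧ Is2ClubGraph H₂ := by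
  have hfin : (Γ \ H.map φ).edgeSet.Finite :=
    (edgeSet_finite_of_support_finite hΓ).subset (edgeSet_mono sdiff_le)
  obtain ⟨l₁, hl₁, happ₁⟩ := exists_opsApply_deleteEdges Γ hfin.toFinset (by simp)
  rw [Set.Finite.coe_toFinset, deleteEdges_edgeSet_sdiff hc.map_le] at happ₁
  obtain ⟨l₂, ψ, hl₂, happ₂, hinj⟩ := exists_opsApply_map_injOn hc.finite_support rfl
    fun _ _ h => (hc.map_adj h).ne
  refine ⟨l₁ ++ l₂, H.map ψ, ?_, happ₁.append happ₂, hc.is2ClubGraph.map_of_injOn hinj⟩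
  rw [List.length_append, hl₁, hl₂, ← Set.ncard_eq_toFinset_card _ hfin, coverCost, add_comm]

lemma IsClubCover.twoCcedvs_le (hc : IsClubCover Γ H φ) (hΓ : Γ.support.Finite) :
    twoCcedvs Γ ≤ coverCost Γ H φ := by
  obtain ⟨l, H₂, hl, happ, hH₂⟩ := hc.exists_opsApply hΓ
  exact (Nat.sInf_le (s := {k | ∃ l H, l.length = k ∧ OpsApply l Γ H ∧ Is2ClubGraph H})
    ⟨l, H₂, rfl, happ, hH₂⟩).trans hl

lemma exists_isClubCover_coverCost_le (hΓ : Γ.support.Finite) :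
    ∃ H φ, IsClubCover Γ H φ ∧ coverCost Γ H φ ≤ twoCcedvs Γ := by
  obtain ⟨l, H₂, -, happ, hH₂⟩ := (isClubCover_bot Γ).exists_opsApply hΓ
  obtain ⟨l, H, hl, happ, hH⟩ := Nat.sInf_mem
    (s := {k | ∃ l H, l.length = k ∧ OpsApply l Γ H ∧ Is2ClubGraph H})
    ⟨l.length, l, H₂, rfl, happ, hH₂⟩
  obtain ⟨H₀, φ, hc, hcost⟩ := exists_isClubCover_of_opsApply happ hΓ hH
  exact ⟨H₀, φ, hc, hcost.trans_eq hl⟩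

end CoverCost

section UpperBound

variable {G H : SimpleGraph ℕ} {φ : ℕ → ℕ}

lemma IsClubCover.exists_support_ge {Γ : SimpleGraph ℕ} (hc : IsClubCover Γ H φ) (N : ℕ) :
    ∃ H₂ φ₂, IsClubCover Γ H₂ φ₂ ∧ coverCost Γ H₂ φ₂ = coverCost Γ H φ ∧
      ∀ t ∈ H₂.support, N ≤ t := by
  have hinj : Function.Injective (· + N) := add_left_injective N
  have hsupp : (H.map (· + N)).support = (· + N) '' H.support :=
    support_map_of_ne fun _ _ h => hinj.ne h.ne
  have hφ : (fun t => φ (t - N)) ∘ (· + N) = φ := by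
    funext
    simp
  refine ⟨H.map (· + N), fun t => φ (t - N),
    ⟨?_, hc.is2ClubGraph.map_of_injOn hinj.injOn, ?_⟩, ?_, ?_⟩
  · rintro _ _ ⟨-, p, q, h, rfl, rfl⟩
    simpa using hc.map_adj h
  · rw [hsupp]
    exact hc.finite_support.image _
  · simp [coverCost, splitExcess, map_map, hφ, hsupp, Set.image_image,
      Set.ncard_image_of_injective _ hinj]
  · rw [hsupp]
    rintro _ ⟨t, -, rfl⟩
    exact Nat.le_add_left N t

lemma edgeSet_sdiff_sup_inducedOn_subset {C : Set ℕ} {y b : ℕ} (M : SimpleGraph ℕ)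
    (hcross : ∀ x z, G.Adj x z → x ∈ C → z ∉ C → x = y ∧ z = b) :
    (G \ (M ⊔ inducedOn G C)).edgeSet ⊆ insert s(y, b) (inducedOn G Cᶜ \ M).edgeSet := by
  intro e he
  induction e using Sym2.ind with
  | h x z =>
    rw [mem_edgeSet, sdiff_adj, sup_adj, not_or] at he
    obtain ⟨hxz, hM, hK⟩ := he
    by_cases hx : x ∈ C <;> by_cases hz : z ∈ C
    · exact absurd ⟨hxz, hx, hz⟩ hK
    · obtain ⟨rfl, rfl⟩ := hcross x z hxz hx hz
      exact Set.mem_insert _ _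
    · obtain ⟨rfl, rfl⟩ := hcross z x hxz.symm hz hx
      rw [Sym2.eq_swap]
      exact Set.mem_insert _ _
    · exact Set.mem_insert_of_mem _ ⟨⟨hxz, hx, hz⟩, hM⟩

lemma IsClubCover.exists_sup_inducedOn {C : Set ℕ} {y b : ℕ} (hG : G.support.Finite)
    (hc : IsClubCover (inducedOn G Cᶜ) H φ) (hHC : Disjoint H.support (inducedOn G C).support)
    (hclub : Inducing2Club G C) (hcross : ∀ x z, G.Adj x z → x ∈ C → z ∉ C → x = y ∧ z = b) :
    ∃ ψ, IsClubCover G (H ⊔ inducedOn G C) ψ ∧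
      coverCost G (H ⊔ inducedOn G C) ψ ≤ coverCost (inducedOn G Cᶜ) H φ + 1 := by
  classical
  set ψ : ℕ → ℕ := fun t => if t ∈ (inducedOn G C).support then t else φ t
  have hψH : Set.EqOn ψ φ H.support := fun t ht => if_neg (Set.disjoint_left.mp hHC ht)
  have hψK : Set.EqOn ψ id (inducedOn G C).support := fun t ht => if_pos ht
  have hKfin : (inducedOn G C).support.Finite := hG.subset (support_mono (inducedOn_le G C))
  have hexcess : splitExcess ψ (H ⊔ inducedOn G C).support ≤ splitExcess φ H.support := by
    have hdisj : Disjoint (ψ '' H.support) (ψ '' (inducedOn G C).support) := by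
      rw [hψH.image_eq, hψK.image_eq, Set.image_id, Set.disjoint_left]
      rintro _ ⟨p, ⟨q, hpq⟩, rfl⟩ ⟨_, -, hp, -⟩
      exact (hc.map_adj hpq).2.1 hp
    have hK : splitExcess ψ (inducedOn G C).support = 0 :=
      (splitExcess_eq_zero_iff hKfin).mpr (hψK.injOn_iff.mpr (Set.injOn_id _))
    have := splitExcess_union_le hc.finite_support hKfin hdisj
    rw [support_sup]
    simp only [splitExcess, hψH.image_eq] at this hK ⊢
    omega
  refine ⟨ψ, ⟨?_, hc.is2ClubGraph.sup hclub.is2ClubGraph hHC, ?_⟩, ?_⟩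
  · rintro p q (h | h)
    · rw [hψH h.mem_support_left, hψH h.mem_support_right]
      exact (hc.map_adj h).1
    · rw [hψK h.mem_support_left, hψK h.mem_support_right]
      exact h.1
  · rw [support_sup]
    exact hc.finite_support.union hKfin
  · have hfin : (inducedOn G Cᶜ \ H.map φ).edgeSet.Finite :=
      (edgeSet_finite_of_support_finite hG).subset
        (edgeSet_mono (sdiff_le.trans (inducedOn_le G _)))
    have := (Set.ncard_le_ncard (edgeSet_sdiff_sup_inducedOn_subset (H.map φ) hcross)
      (hfin.insert _)).trans (Set.ncard_insert_le _ _)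
    rw [coverCost, coverCost, map_sup, map_congr hψH, map_congr hψK, map_id]
    omega

theorem twoCcedvs_le_twoCcedvs_inducedOn_compl_add_one (hG : G.support.Finite) {C : Set ℕ}
    {y b : ℕ} (hclub : Inducing2Club G C)
    (hcross : ∀ x z, G.Adj x z → x ∈ C → z ∉ C → x = y ∧ z = b) :
    twoCcedvs G ≤ twoCcedvs (inducedOn G Cᶜ) + 1 := by
  obtain ⟨H, φ, hc, hcost⟩ :=
    exists_isClubCover_coverCost_le (hG.subset (support_mono (inducedOn_le G Cᶜ)))
  obtain ⟨N, hN⟩ := (hG.subset (support_mono (inducedOn_le G C))).bddAbove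
  obtain ⟨H₂, φ₂, hc₂, hcost₂, hH₂⟩ := hc.exists_support_ge (N + 1)
  have hdisj : Disjoint H₂.support (inducedOn G C).support :=
    Set.disjoint_left.mpr fun t ht hK => by
      have := hH₂ t ht
      have := hN hK
      omega
  obtain ⟨ψ, hc', hcost'⟩ := hc₂.exists_sup_inducedOn hG hdisj hclub hcross
  have := hc'.twoCcedvs_le hG
  omega

end UpperBound

section LowerBound

variable {G H : SimpleGraph ℕ} {φ : ℕ → ℕ} {C : Set ℕ}

lemma edgeSet_inducedOn_compl_sdiff_map_subset :
    (inducedOn G Cᶜ \ (inducedOn H (φ ⁻¹' Cᶜ)).map φ).edgeSet ⊆ (G \ H.map φ).edgeSet := by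
  intro e he
  induction e using Sym2.ind with
  | h x z =>
    obtain ⟨⟨hxz, hx, hz⟩, hnot⟩ := he
    refine ⟨hxz, ?_⟩
    rintro ⟨hne, p, q, hpq, rfl, rfl⟩
    exact hnot ⟨hne, p, q, ⟨hpq, hx, hz⟩, rfl, rfl⟩

/-- Keep the copies of vertices outside `C`; two copies attached to a common copy of a vertex of
`C` are both copies of `b`, and they are merged so that no distance grows beyond two. -/
lemma IsClubCover.exists_inducedOn_compl {b : ℕ} (hc : IsClubCover G H φ)
    (hcross : ∀ x z, G.Adj x z → x ∈ C → z ∉ C → z = b) :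
    ∃ H', IsClubCover (inducedOn G Cᶜ) H' φ ∧
      splitExcess φ H'.support ≤ splitExcess φ (H.support ∩ φ ⁻¹' Cᶜ) ∧
      (inducedOn G Cᶜ \ H'.map φ).edgeSet ⊆ (G \ H.map φ).edgeSet := by
  set T := φ ⁻¹' Cᶜ
  let R : ℕ → ℕ → Prop := fun u v => u ∈ T ∧ v ∈ T ∧ ∃ m ∉ T, H.Adj m u ∧ H.Adj m v
  let r : ℕ → ℕ := fun u => (Quot.mk R u).out
  have hRφ : ∀ {u v}, Relation.EqvGen R u v → φ u = φ v := by
    intro u v h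
    refine (Equivalence.eqvGen_iff (r := fun u v => φ u = φ v)
      ⟨fun _ => rfl, Eq.symm, Eq.trans⟩).mp (h.mono ?_)
    rintro u v ⟨hu, hv, m, hm, hmu, hmv⟩
    have hmC : φ m ∈ C := by simpa [T] using hm
    rw [hcross _ _ (hc.map_adj hmu) hmC hu, hcross _ _ (hc.map_adj hmv) hmC hv]
  have hRH : ∀ {u v}, Relation.EqvGen R u v → H.Reachable u v := fun h =>
    (Equivalence.eqvGen_iff (reachable_is_equivalence H)).mp
      (h.mono fun _ _ ⟨_, _, _, _, hmu, hmv⟩ => hmu.symm.reachable.trans hmv.reachable)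
  have hφr : ∀ u, φ (r u) = φ u := fun u => hRφ (Quot.eqvGen_exact (Quot.out_eq _))
  have hmap : ((inducedOn H T).map r).map φ = (inducedOn H T).map φ := by
    rw [map_map]
    exact congrArg (SimpleGraph.map · _) (funext hφr)
  have hST : (H.support ∩ T).Finite := hc.finite_support.inter_of_left T
  have hsupp : ((inducedOn H T).map r).support ⊆ r '' (H.support ∩ T) :=
    (support_map_subset _ r).trans (Set.image_mono fun p ⟨q, hpq, hp, _⟩ => ⟨⟨q, hpq⟩, hp⟩)
  refine ⟨(inducedOn H T).map r, ⟨?_, ?_, (hST.image r).subset hsupp⟩,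
    (splitExcess_mono (hST.image r) hsupp).trans (splitExcess_image_le hST hφr), ?_⟩
  · rintro _ _ ⟨-, p, q, ⟨hpq, hp, hq⟩, rfl, rfl⟩
    rw [hφr, hφr]
    exact ⟨hc.map_adj hpq, hp, hq⟩
  · refine hc.is2ClubGraph.map_inducedOn (fun p _ q _ h => hRH (Quot.eqvGen_exact ?_))
      fun u hu v hv m hm hmu hmv => congrArg Quot.out (Quot.sound ⟨hu, hv, m, hm, hmu, hmv⟩)
    simpa [r, Quot.out_eq] using congrArg (Quot.mk R) h
  · rw [hmap]
    exact edgeSet_inducedOn_compl_sdiff_map_subset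

lemma IsClubCover.not_injOn_or_exists_uncovered {y b a w : ℕ} (hc : IsClubCover G H φ)
    (hcross : ∀ x z, G.Adj x z → x ∈ C → z ∉ C → x = y ∧ z = b) (hy : y ∈ C) (hb : b ∉ C)
    (hyb : G.Adj y b) (ha : a ∈ C) (hw : w ∈ C) (hay : a ≠ y) (hyw : G.Adj y w)
    (hwa : G.Adj w a) (hya : ¬ G.Adj y a) :
    ¬ (H.support ∩ φ ⁻¹' C).InjOn φ ∨
      ∃ e ∈ (G \ H.map φ).edgeSet, e ∉ (inducedOn G Cᶜ).edgeSet := by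
  by_contra! ⟨hinj, hcov⟩
  have hlift : ∀ {x z}, G.Adj x z → x ∈ C → ∃ p q, H.Adj p q ∧ φ p = x ∧ φ q = z := by
    intro x z hxz hx
    by_contra hnot
    have := hcov s(x, z) ⟨hxz, fun ⟨_, p, q, h, hp, hq⟩ => hnot ⟨p, q, h, hp, hq⟩⟩
    exact (inducedOn_adj.mp this).2.1 hx
  obtain ⟨p₁, q₁, h₁, rfl, rfl⟩ := hlift hyw hy
  obtain ⟨p₂, q₂, h₂, hp₂, rfl⟩ := hlift hwa hw
  obtain ⟨p₃, q₃, h₃, hp₃, rfl⟩ := hlift hyb hy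
  obtain rfl : p₃ = p₁ :=
    hinj ⟨h₃.mem_support_left, show φ p₃ ∈ C from hp₃ ▸ hy⟩ ⟨h₁.mem_support_left, hy⟩ hp₃
  obtain rfl : p₂ = q₁ :=
    hinj ⟨h₂.mem_support_left, show φ p₂ ∈ C from hp₂ ▸ hw⟩ ⟨h₁.mem_support_right, hw⟩ hp₂
  have hreach : H.Reachable q₂ q₃ :=
    h₂.symm.reachable.trans (h₁.symm.reachable.trans h₃.reachable)
  rcases hreach.eq_or_adj_or_exists_adj_adj (hc.is2ClubGraph _ _ hreach) with h | h | ⟨m, hm₁, hm₂⟩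
  · exact hb (h ▸ ha)
  · exact hay (hcross _ _ (hc.map_adj h) ha hb).1
  · by_cases hmC : φ m ∈ C
    · obtain ⟨hm, -⟩ := hcross _ _ (hc.map_adj hm₂) hmC hb
      exact hya (hm ▸ (hc.map_adj hm₁).symm)
    · exact hay (hcross _ _ (hc.map_adj hm₁) ha hmC).1

lemma IsClubCover.exists_inducedOn_compl_coverCost_lt {y b a w : ℕ} (hG : G.support.Finite)
    (hc : IsClubCover G H φ) (hcross : ∀ x z, G.Adj x z → x ∈ C → z ∉ C → x = y ∧ z = b)
    (hy : y ∈ C) (hb : b ∉ C) (hyb : G.Adj y b) (ha : a ∈ C) (hw : w ∈ C) (hay : a ≠ y)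
    (hyw : G.Adj y w) (hwa : G.Adj w a) (hya : ¬ G.Adj y a) :
    ∃ H', IsClubCover (inducedOn G Cᶜ) H' φ ∧
      coverCost (inducedOn G Cᶜ) H' φ < coverCost G H φ := by
  obtain ⟨H', hc', hexcess, hsub⟩ :=
    hc.exists_inducedOn_compl fun x z h hx hz => (hcross x z h hx hz).2
  refine ⟨H', hc', ?_⟩
  have hS := hc.finite_support
  have hsplit : splitExcess φ (H.support ∩ φ ⁻¹' Cᶜ) + splitExcess φ (H.support ∩ φ ⁻¹' C) ≤
      splitExcess φ H.support := by
    have := splitExcess_add_le_union (φ := φ) (hS.inter_of_left (φ ⁻¹' Cᶜ))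
      (hS.inter_of_left (φ ⁻¹' C))
      (disjoint_compl_left.mono Set.inter_subset_right Set.inter_subset_right)
    rwa [Set.union_comm, Set.preimage_compl, Set.inter_union_compl] at this
  have hU : (G \ H.map φ).edgeSet.Finite :=
    (edgeSet_finite_of_support_finite hG).subset (edgeSet_mono sdiff_le)
  unfold coverCost
  rcases hc.not_injOn_or_exists_uncovered hcross hy hb hyb ha hw hay hyw hwa hya with
    hni | ⟨e, he, he'⟩
  · have := (splitExcess_eq_zero_iff (hS.inter_of_left _)).not.mpr hni
    have := Set.ncard_le_ncard hsub hU
    omega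
  · have := Set.ncard_lt_ncard ((Set.ssubset_iff_of_subset hsub).mpr
      ⟨e, he, fun h => he' (edgeSet_mono sdiff_le h)⟩) hU
    omega

theorem twoCcedvs_inducedOn_compl_add_one_le (hG : G.support.Finite) {y b : ℕ}
    (hcross : ∀ x z, G.Adj x z → x ∈ C → z ∉ C → x = y ∧ z = b) (hy : y ∈ C) (hb : b ∉ C)
    (hyb : G.Adj y b) (hdist : ∃ a ∈ C, (inducedOn G C).dist y a = 2) :
    twoCcedvs (inducedOn G Cᶜ) + 1 ≤ twoCcedvs G := by
  obtain ⟨a, ha, hdist⟩ := hdist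
  obtain ⟨hya, hadj, w, hyw, hwa⟩ := exists_adj_adj_of_dist_eq_two hdist
  obtain ⟨H, φ, hc, hcost⟩ := exists_isClubCover_coverCost_le hG
  obtain ⟨H', hc', hlt⟩ := hc.exists_inducedOn_compl_coverCost_lt hG hcross hy hb hyb ha
    hyw.2.2 (Ne.symm hya) hyw.1 hwa.1 fun h => hadj ⟨h, hy, ha⟩
  have := hc'.twoCcedvs_le (hG.subset (support_mono (inducedOn_le G _)))
  omega

end LowerBound

theorem twoCcedvs_eq_twoCcedvs_inducedOn_compl_add_one {G : SimpleGraph ℕ}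
    (hG : G.support.Finite) {C : Set ℕ} {y b : ℕ} (hclub : Inducing2Club G C)
    (hcross : ∀ x z, G.Adj x z → x ∈ C → z ∉ C → x = y ∧ z = b) (hy : y ∈ C) (hb : b ∉ C)
    (hyb : G.Adj y b) (hdist : ∃ a ∈ C, (inducedOn G C).dist y a = 2) :
    twoCcedvs G = twoCcedvs (inducedOn G Cᶜ) + 1 :=
  le_antisymm (twoCcedvs_le_twoCcedvs_inducedOn_compl_add_one hG hclub hcross)
    (twoCcedvs_inducedOn_compl_add_one_le hG hcross hy hb hyb hdist)

theorem stmt7 (G : SimpleGraph ℕ) (hfin : G.support.Finite) (y : ℕ) (A : Set ℕ)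
    (hA : ∃ a ∈ A, a ≠ y ∧ A = {x | (inducedOn G {z | z ≠ y}).Reachable a x})
    (h2club : Inducing2Club G (A ∪ {y}))
    (hdist : ∃ a ∈ A, (inducedOn G (A ∪ {y})).dist y a = 2)
    (hB : Set.ncard (G.neighborSet y ∩ {x | x ∉ A ∧ x ≠ y}) = 1) :
    twoCcedvs G = twoCcedvs (inducedOn G {x | x ∉ A ∧ x ≠ y}) + 1 := by
  obtain ⟨a₀, -, ha₀y, hA⟩ := hA
  obtain ⟨b, hb⟩ := Set.ncard_eq_one.mp hB
  obtain ⟨hyb, hbA, hby⟩ : b ∈ G.neighborSet y ∩ {x | x ∉ A ∧ x ≠ y} := hb ▸ rfl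
  have hyA : y ∉ A := fun h => by
    obtain ⟨_, -, hy, -⟩ := mem_support_of_reachable (Ne.symm ha₀y) (hA ▸ h).symm
    exact hy rfl
  have hcross : ∀ x z, G.Adj x z → x ∈ A ∪ {y} → z ∉ A ∪ {y} → x = y ∧ z = b := by
    intro x z hxz hx hz
    simp only [Set.mem_union, Set.mem_singleton_iff, not_or] at hx hz
    obtain rfl : x = y := hx.resolve_left fun hxA => by
      have hxy : x ≠ y := fun h => hyA (h ▸ hxA)
      rw [hA] at hxA hz
      exact hz.1 (hxA.trans (Adj.reachable ⟨hxz, hxy, hz.2⟩))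
    exact ⟨rfl, (hb ▸ ⟨hxz, hz⟩ : z ∈ ({b} : Set ℕ))⟩
  have hcompl : {x | x ∉ A ∧ x ≠ y} = (A ∪ {y})ᶜ := by
    ext
    simp [and_comm]
  obtain ⟨a, ha, hda⟩ := hdist
  rw [hcompl]
  exact twoCcedvs_eq_twoCcedvs_inducedOn_compl_add_one hfin h2club hcross (Or.inr rfl)
    (by simp [hbA, hby]) hyb ⟨a, Or.inl ha, hda⟩
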